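/- For positive definite matrices A and B, the matrix geometric mean satisfies the arithmetic–geometric mean inequality: A # B ≤ (A + B)/2 in the Loewner order. -/

import Mathlib

open Matrix Kronecker
open scoped ComplexOrder

noncomputable section
attribute [local instance] Classical.propDecidable

/-- Moore–Penrose pseudoinverse of a square complex matrix. -/
def pinv {n : Type*} [Fintype n] [DecidableEq n] (A : Matrix n n ℂ) : Matrix n n ℂ :=
  if h : ∃ B : Matrix n n ℂ,
      A * B * A = A ∧ B * A * B = B ∧ (A * B)ᴴ = A * B ∧ (B * A)ᴴ = B * A
  then h.choose else 0

/-- Positive semidefinite square root (junk value `0` if the matrix is not PSD). -/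
def msqrt {n : Type*} [Fintype n] [DecidableEq n] (A : Matrix n n ℂ) : Matrix n n ℂ :=
  if h : A.PosSemidef then
    (h.1.eigenvectorUnitary : Matrix n n ℂ) * diagonal ((↑) ∘ (√·) ∘ h.1.eigenvalues) *
      (star (h.1.eigenvectorUnitary : Matrix n n ℂ))
  else 0

/-- `sgn(X) = U sgn(Σ) V*` for an SVD `X = U Σ V*`; equivalently `X (X* X)^{-1/2}`
with the Moore–Penrose pseudoinverse. -/
def msgn {n : Type*} [Fintype n] [DecidableEq n] (X : Matrix n n ℂ) : Matrix n n ℂ :=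
  X * pinv (msqrt (Xᴴ * X))

/-- Matrix geometric mean `A # B = A^{1/2} (A^{-1/2} B A^{-1/2})^{1/2} A^{1/2}`
(with Moore–Penrose pseudoinverses). -/
def geo {n : Type*} [Fintype n] [DecidableEq n] (A B : Matrix n n ℂ) : Matrix n n ℂ :=
  msqrt A * msqrt (pinv (msqrt A) * B * pinv (msqrt A)) * msqrt A

/-- The unnormalized maximally entangled state `|Ω⟩ = ∑ i, |i⟩ ⊗ |i⟩`. -/
def omegaVec (d : ℕ) : Fin d × Fin d → ℂ := fun p => if p.1 = p.2 then 1 else 0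

/-- Reduced density matrix of `|C⟩⟨C|` on the first subsystem
(partial trace over the second subsystem). -/
def reducedA {d : ℕ} (C : Fin d × Fin d → ℂ) : Matrix (Fin d) (Fin d) ℂ :=
  Matrix.of fun i j => ∑ k, C (i, k) * star (C (j, k))

/-- Partial trace over the first subsystem of the operator `|D⟩⟨C|`. -/
def trA {d : ℕ} (D C : Fin d × Fin d → ℂ) : Matrix (Fin d) (Fin d) ℂ :=
  Matrix.of fun j l => ∑ i, D (i, j) * star (C (i, l))

/-- `ℓ²→ℓ²` operator norm (largest singular value). -/
def opNorm {n : Type*} [Fintype n] [DecidableEq n] (A : Matrix n n ℂ) : ℝ :=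
  ‖(Matrix.toEuclideanCLM (𝕜 := ℂ) A : EuclideanSpace ℂ n →L[ℂ] EuclideanSpace ℂ n)‖

/-- `P` is the orthogonal projection onto the image (column space) of `A`. -/
def IsOrthProjOnto {n : Type*} [Fintype n] [DecidableEq n] (P A : Matrix n n ℂ) : Prop :=
  Pᴴ = P ∧ P * P = P ∧ LinearMap.range P.mulVecLin = LinearMap.range A.mulVecLin

/-- `η` is the smallest nonzero eigenvalue of the Hermitian matrix `M`. -/
def IsSmallestNonzeroEigenvalue {n : Type*} [Fintype n] [DecidableEq n]
    (M : Matrix n n ℂ) (η : ℝ) : Prop :=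
  ∃ hM : M.IsHermitian, η ≠ 0 ∧ (∃ i, hM.eigenvalues i = η) ∧
    ∀ i, hM.eigenvalues i ≠ 0 → η ≤ hM.eigenvalues i

/-! With `S = A^{1/2}` and `T = (S⁻¹ B S⁻¹)^{1/2}`, both Hermitian, we have `A = S²`, `B = S T² S`
and `A # B = S T S`, so `(A + B)/2 - A # B = ½ S (1 - T)² S = ½ ((1 - T) S)ᴴ ((1 - T) S) ≥ 0`. -/

section

open scoped MatrixOrder

variable {n : Type*} [Fintype n] [DecidableEq n]

lemma pinv_eq_nonsing_inv {A : Matrix n n ℂ} (h : IsUnit A) : pinv A = A⁻¹ := by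
  have hdet : IsUnit A.det := (isUnit_iff_isUnit_det A).mp h
  have hex : ∃ B : Matrix n n ℂ,
      A * B * A = A ∧ B * A * B = B ∧ (A * B)ᴴ = A * B ∧ (B * A)ᴴ = B * A :=
    ⟨A⁻¹, by simp [mul_nonsing_inv _ hdet], by simp [nonsing_inv_mul _ hdet],
      by simp [mul_nonsing_inv _ hdet], by simp [nonsing_inv_mul _ hdet]⟩
  rw [pinv, dif_pos hex]
  calc hex.choose = A⁻¹ * A * hex.choose * (A * A⁻¹) := by
        rw [nonsing_inv_mul _ hdet, mul_nonsing_inv _ hdet, Matrix.one_mul, Matrix.mul_one]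
    _ = A⁻¹ * (A * hex.choose * A) * A⁻¹ := by simp only [Matrix.mul_assoc]
    _ = A⁻¹ := by rw [hex.choose_spec.1, nonsing_inv_mul _ hdet, Matrix.one_mul]

lemma msqrt_eq_sqrt {A : Matrix n n ℂ} (hA : A.PosSemidef) : msqrt A = CFC.sqrt A := by
  rw [CFC.sqrt_eq_cfc, cfc_nnreal_eq_real _ A, hA.1.cfc_eq, msqrt, dif_pos hA]
  simp only [IsHermitian.cfc, Real.coe_sqrt, Real.coe_toNNReal']
  congr 3
  funext i
  simp [hA.eigenvalues_nonneg i]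

lemma Matrix.PosDef.isUnit_sqrt {A : Matrix n n ℂ} (hA : A.PosDef) : IsUnit (CFC.sqrt A) :=
  (CFC.isUnit_sqrt_iff A hA.posSemidef.nonneg).mpr hA.isUnit

lemma Matrix.PosSemidef.inv_sqrt_mul_mul_inv_sqrt {B : Matrix n n ℂ} (hB : B.PosSemidef)
    (A : Matrix n n ℂ) : ((CFC.sqrt A)⁻¹ * B * (CFC.sqrt A)⁻¹).PosSemidef := by
  simpa [(CFC.sqrt_nonneg A).posSemidef.isHermitian.inv.eq] using
    hB.conjTranspose_mul_mul_same (CFC.sqrt A)⁻¹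

lemma geo_eq_of_posDef {A B : Matrix n n ℂ} (hA : A.PosDef) (hB : B.PosSemidef) :
    geo A B = CFC.sqrt A * CFC.sqrt ((CFC.sqrt A)⁻¹ * B * (CFC.sqrt A)⁻¹) * CFC.sqrt A := by
  rw [geo, msqrt_eq_sqrt hA.posSemidef, pinv_eq_nonsing_inv hA.isUnit_sqrt,
    msqrt_eq_sqrt (hB.inv_sqrt_mul_mul_inv_sqrt A)]

lemma mul_conj_nonsing_inv_mul {S : Matrix n n ℂ} (hS : IsUnit S) (B : Matrix n n ℂ) :
    S * (S⁻¹ * B * S⁻¹) * S = B := by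
  have hdet : IsUnit S.det := (isUnit_iff_isUnit_det S).mp hS
  rw [Matrix.mul_assoc, nonsing_inv_mul_cancel_right _ _ hdet, ← Matrix.mul_assoc,
    mul_nonsing_inv _ hdet, Matrix.one_mul]

lemma posSemidef_half_smul_add_sub_mul_mul {S T : Matrix n n ℂ} (hS : S.IsHermitian)
    (hT : T.IsHermitian) :
    ((2 : ℂ)⁻¹ • (S * S + S * (T * T) * S) - S * T * S).PosSemidef := by
  have h : (2 : ℂ)⁻¹ • (S * S + S * (T * T) * S) - S * T * S =
      (2 : ℂ)⁻¹ • (((1 - T) * S)ᴴ * ((1 - T) * S)) := by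
    have hexpand : S * (1 - T) * ((1 - T) * S) = S * S + S * (T * T) * S - 2 • (S * T * S) := by
      noncomm_ring
    rw [conjTranspose_mul, conjTranspose_sub, conjTranspose_one, hS.eq, hT.eq, hexpand]
    module
  rw [h]
  exact (posSemidef_conjTranspose_mul_self _).smul (by norm_num [Complex.nonneg_iff])

end

theorem geo_mean_le_arith {n : Type*} [Fintype n] [DecidableEq n]
    (A B : Matrix n n ℂ) (hA : A.PosDef) (hB : B.PosDef) :
    ((2 : ℂ)⁻¹ • (A + B) - geo A B).PosSemidef := by
  open scoped MatrixOrder in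
  have hM := hB.posSemidef.inv_sqrt_mul_mul_inv_sqrt A
  have key := posSemidef_half_smul_add_sub_mul_mul (CFC.sqrt_nonneg A).posSemidef.isHermitian
    (CFC.sqrt_nonneg ((CFC.sqrt A)⁻¹ * B * (CFC.sqrt A)⁻¹)).posSemidef.isHermitian
  rwa [CFC.sqrt_mul_sqrt_self A hA.posSemidef.nonneg, CFC.sqrt_mul_sqrt_self _ hM.nonneg,
    mul_conj_nonsing_inv_mul hA.isUnit_sqrt, ← geo_eq_of_posDef hA hB.posSemidef] at key
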